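/- (Maximum at boundaries for the absolute statistical parity smooth sensitivity) Let β > 0 and m > 0 be real numbers and let N0 ≥ 2 be an integer. Then the maximum over integers k ∈ {0, 1, …, N0 − 2} of m · e^{−kβ} / (N0 − k) equals max( m/N0 , m · e^{−(N0 − 2)β} / 2 ). -/

import Mathlib

/-!
The summand `x ↦ m e^{-xβ} / (N0 - x)` is log-convex on `x < N0`, since its logarithm
`log m - xβ - log (N0 - x)` is convex; hence it is convex there, and a convex function on
`[0, N0 - 2]` attains its maximum at an endpoint.
-/

open Real Set Finset

theorem convexOn_neg_log_sub (N : ℝ) : ConvexOn ℝ (Iio N) fun x => -log (N - x) := by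
  have h := strictConcaveOn_log_Ioi.concaveOn.neg.comp_affineMap
    (AffineMap.const ℝ ℝ N - AffineMap.id ℝ ℝ)
  refine h.subset (fun x hx => ?_) (convex_Iio N)
  simpa using hx

theorem ConvexOn.exp {s : Set ℝ} {f : ℝ → ℝ} (hf : ConvexOn ℝ s f) :
    ConvexOn ℝ s fun x => Real.exp (f x) :=
  ⟨hf.1, fun _ hx _ hy _ _ ha hb hab => (exp_le_exp.2 (hf.2 hx hy ha hb hab)).trans
    (convexOn_exp.2 trivial trivial ha hb hab)⟩

theorem convexOn_exp_mul_div_sub (c N : ℝ) :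
    ConvexOn ℝ (Iio N) fun x => Real.exp (c * x) / (N - x) := by
  have hlog : ConvexOn ℝ (Iio N) fun x => c * x + -log (N - x) :=
    ((LinearMap.mul ℝ ℝ c).convexOn (convex_Iio N)).add (convexOn_neg_log_sub N)
  refine hlog.exp.congr fun x hx => ?_
  dsimp only
  rw [Real.exp_add, Real.exp_neg, exp_log (sub_pos.2 hx), div_eq_mul_inv]

theorem Finset.sup'_range_succ_eq_max_of_convexOn {s : Set ℝ} {f : ℝ → ℝ} (n : ℕ)
    (hf : ConvexOn ℝ s f) (h0 : 0 ∈ s) (hn : (n : ℝ) ∈ s) :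
    (range (n + 1)).sup' nonempty_range_add_one (fun k : ℕ => f k) = max (f 0) (f n) := by
  refine le_antisymm (sup'_le _ _ fun k hk => hf.le_max_of_mem_Icc h0 hn ⟨?_, ?_⟩) ?_
  · positivity
  · exact_mod_cast Nat.lt_succ_iff.mp (mem_range.mp hk)
  · exact max_le (le_sup'_of_le _ (mem_range.mpr n.succ_pos) (by simp))
      (le_sup' (fun k : ℕ => f k) (self_mem_range_succ n))

/-- Maximum at boundaries for the absolute statistical parity smooth
sensitivity: the maximum over integers `k ∈ {0, …, N0 - 2}` of `m·e^{-kβ}/(N0 - k)`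
equals `max( m/N0 , m·e^{-(N0-2)β}/2 )`. -/
theorem abs_sp_smooth_sensitivity_max (β m : ℝ) (hm : 0 < m)
    (N0 : ℕ) (hN0 : 2 ≤ N0) :
    (Finset.range (N0 - 1)).sup' (Finset.nonempty_range_iff.mpr (by omega))
      (fun k => m * Real.exp (-(k : ℝ) * β) / ((N0 : ℝ) - k))
    = max (m / (N0 : ℝ)) (m * Real.exp (-((N0 : ℝ) - 2) * β) / 2) := by
  obtain ⟨n, rfl⟩ : ∃ n, N0 = n + 2 := ⟨N0 - 2, by omega⟩
  have hconv : ConvexOn ℝ (Iio ((n + 2 : ℕ) : ℝ))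
      fun x => m * Real.exp (-x * β) / ((n + 2 : ℕ) - x) :=
    ((convexOn_exp_mul_div_sub (-β) _).smul hm.le).congr fun x _ => by
      simp only [smul_eq_mul]
      ring_nf
  convert Finset.sup'_range_succ_eq_max_of_convexOn n hconv
    (mem_Iio.2 (by positivity)) (mem_Iio.2 (by push_cast; linarith)) using 2
  · rfl
  · simp
  · push_cast
    ring_nf
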